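/- arXiv:gr-qc/0111108 — 2 statements merged into one kernel-verified Lean document; each statement's English description precedes it below -/
import Mathlib

section
/- Let m ∈ ℕ, ρ ∈ ℝ, N ∈ ℕ with N ≥ 1, and let u be a tempered distribution on ℝ^m that scales almost homogeneously with degree ρ, i.e. S_ρ^N u = 0. Then the Fourier transform û of u scales almost homogeneously with degree m − ρ, i.e. S_{m−ρ}^N û = 0. -/
open SchwartzMap

noncomputable section

/-- Multiplication by the `i`-th coordinate function, as a continuous linear map on
Schwartz space over `ℝ^m`. -/
def coordMulCLM (m : ℕ) (i : Fin m) :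
    𝓢(EuclideanSpace ℝ (Fin m), ℂ) →L[ℝ] 𝓢(EuclideanSpace ℝ (Fin m), ℂ) :=
  SchwartzMap.bilinLeftCLM ((ContinuousLinearMap.lsmul ℝ ℝ : ℝ →L[ℝ] ℂ →L[ℝ] ℂ).flip)
    (EuclideanSpace.proj (𝕜 := ℝ) i).hasTemperateGrowth

/-- The scaling (Euler) operator `S_ρ` on tempered distributions:
`(S_ρ u)(f) = ρ·u(f) − Σ_i u(∂_i(x_i f))`. -/
def eulerOp (m : ℕ) (ρ : ℝ) (u : 𝓢(EuclideanSpace ℝ (Fin m), ℂ) →L[ℝ] ℂ) :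
    𝓢(EuclideanSpace ℝ (Fin m), ℂ) →L[ℝ] ℂ :=
  ρ • u - ∑ i : Fin m,
    u.comp ((LineDeriv.lineDerivOpCLM ℝ 𝓢(EuclideanSpace ℝ (Fin m), ℂ) (EuclideanSpace.single i (1 : ℝ))).comp (coordMulCLM m i))

/-! The Fourier transform turns `∂ᵢ` into multiplication by `2πi kᵢ` and multiplication by `xᵢ`
into `-(2πi)⁻¹ ∂ᵢ`. Hence `𝓕 (∂ᵢ (xᵢ f)) = -kᵢ ∂ᵢ (𝓕 f) = 𝓕 f - ∂ᵢ (kᵢ 𝓕 f)`, and summing over `i`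
gives `S_{m-ρ} û = -(S_ρ u)^`. Iterating, `S_{m-ρ}^N û = (-1)^N (S_ρ^N u)^`. -/

open LineDeriv
open scoped FourierTransform

namespace SchwartzMap

theorem lineDerivOp_smulLeftCLM_inner {V F : Type*} [NormedAddCommGroup V]
    [InnerProductSpace ℝ V] [NormedAddCommGroup F] [NormedSpace ℝ F] (v w : V) (f : 𝓢(V, F)) :
    ∂_{v} (smulLeftCLM F (inner ℝ · w) f) =
      inner ℝ v w • f + smulLeftCLM F (inner ℝ · w) (∂_{v} f) := by
  have hw : (inner ℝ · w).HasTemperateGrowth := ((innerSL ℝ).flip w).hasTemperateGrowth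
  ext x
  have hprod : HasFDerivAt (fun y ↦ inner ℝ y w • f y)
      (inner ℝ x w • fderiv ℝ f x + ((innerSL ℝ).flip w).smulRight (f x)) x :=
    ((innerSL ℝ).flip w).hasFDerivAt.smul (f.hasFDerivAt x)
  rw [lineDerivOp_apply_eq_fderiv, smulLeftCLM_apply hw, hprod.fderiv]
  simp [smulLeftCLM_apply_apply hw, lineDerivOp_apply_eq_fderiv, innerSL_apply_apply ℝ,
    real_inner_comm w v, add_comm]

theorem fourier_lineDerivOp_smulLeftCLM_inner_add {V E : Type*} [NormedAddCommGroup V]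
    [InnerProductSpace ℝ V] [FiniteDimensional ℝ V] [MeasurableSpace V] [BorelSpace V]
    [NormedAddCommGroup E] [NormedSpace ℂ E] (v w : V) (f : 𝓢(V, E)) :
    𝓕 (∂_{v} (smulLeftCLM E (inner ℝ · w) f)) + ∂_{w} (smulLeftCLM E (inner ℝ · v) (𝓕 f)) =
      inner ℝ w v • 𝓕 f := by
  have hv : (inner ℝ · v).HasTemperateGrowth := ((innerSL ℝ).flip v).hasTemperateGrowth
  rw [fourier_lineDerivOp_eq, lineDerivOp_smulLeftCLM_inner, lineDerivOp_fourier_eq,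
    FourierTransform.fourier_smul]
  ext x
  simp only [add_apply, smul_apply, smulLeftCLM_apply_apply hv]
  rw [smul_comm (inner ℝ x v) (-(2 * Real.pi * Complex.I)), neg_smul]
  abel

end SchwartzMap

theorem coordMulCLM_eq_smulLeftCLM_inner (m : ℕ) (i : Fin m) :
    coordMulCLM m i = smulLeftCLM ℂ (inner ℝ · (EuclideanSpace.single i (1 : ℝ))) := by
  have hi : (inner ℝ · (EuclideanSpace.single i (1 : ℝ))).HasTemperateGrowth :=
    ((innerSL ℝ).flip _).hasTemperateGrowth
  ext f x
  rw [smulLeftCLM_apply_apply hi]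
  simp [coordMulCLM, EuclideanSpace.inner_single_right]

theorem fourier_lineDerivOp_coordMulCLM_add (m : ℕ) (i : Fin m)
    (f : 𝓢(EuclideanSpace ℝ (Fin m), ℂ)) :
    𝓕 (∂_{EuclideanSpace.single i (1 : ℝ)} (coordMulCLM m i f)) +
      ∂_{EuclideanSpace.single i (1 : ℝ)} (coordMulCLM m i (𝓕 f)) = 𝓕 f := by
  simpa [coordMulCLM_eq_smulLeftCLM_inner] using fourier_lineDerivOp_smulLeftCLM_inner_add
    (EuclideanSpace.single i (1 : ℝ)) (EuclideanSpace.single i (1 : ℝ)) f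

theorem eulerOp_comp_fourierTransformCLM (m : ℕ) (ρ : ℝ)
    (u : 𝓢(EuclideanSpace ℝ (Fin m), ℂ) →L[ℝ] ℂ) :
    eulerOp m (m - ρ) (u.comp (fourierTransformCLM ℝ)) =
      (-eulerOp m ρ u).comp (fourierTransformCLM ℝ) := by
  ext f
  have hswap : ∀ i : Fin m, u (𝓕 (∂_{EuclideanSpace.single i (1 : ℝ)} (coordMulCLM m i f))) =
      u (𝓕 f) - u (∂_{EuclideanSpace.single i (1 : ℝ)} (coordMulCLM m i (𝓕 f))) := fun i ↦ by
    rw [eq_sub_iff_add_eq, ← map_add, fourier_lineDerivOp_coordMulCLM_add]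
  simp only [eulerOp, sub_apply, smul_apply, ContinuousLinearMap.comp_apply,
    fourierTransformCLM_apply, Complex.real_smul, Complex.ofReal_sub, Complex.ofReal_natCast,
    sum_apply, lineDerivOpCLM_apply, hswap, Finset.sum_sub_distrib, Finset.sum_const,
    Finset.card_univ, Fintype.card_fin, nsmul_eq_mul, neg_sub, ContinuousLinearMap.sub_comp,
    ContinuousLinearMap.smul_comp]
  ring

theorem eulerOp_neg (m : ℕ) (ρ : ℝ) (u : 𝓢(EuclideanSpace ℝ (Fin m), ℂ) →L[ℝ] ℂ) :
    eulerOp m ρ (-u) = -eulerOp m ρ u := by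
  simp only [eulerOp, smul_neg, ContinuousLinearMap.neg_comp, Finset.sum_neg_distrib,
    sub_neg_eq_add, neg_sub]
  abel

theorem fourierTransform_almost_homogeneous_general (m : ℕ) (ρ : ℝ) (N : ℕ)
    (u : 𝓢(EuclideanSpace ℝ (Fin m), ℂ) →L[ℝ] ℂ)
    (hu : (eulerOp m ρ)^[N] u = 0) :
    (eulerOp m ((m : ℝ) - ρ))^[N] (u.comp (SchwartzMap.fourierTransformCLM ℝ)) = 0 := by
  have hsemiconj : Function.Semiconj (fun v ↦ v.comp (fourierTransformCLM ℝ))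
      (Neg.neg ∘ eulerOp m ρ) (eulerOp m (m - ρ)) :=
    fun v ↦ (eulerOp_comp_fourierTransformCLM m ρ v).symm
  have hcomm : Function.Commute Neg.neg (eulerOp m ρ) := fun v ↦ (eulerOp_neg m ρ v).symm
  rw [← hsemiconj.iterate_right N u, hcomm.comp_iterate, Function.comp_apply, hu,
    Function.iterate_fixed neg_zero]
  exact ContinuousLinearMap.zero_comp _

/-- If `S_ρ^N u = 0` with `N ≥ 1`, then the Fourier transform `û = u ∘ 𝓕` satisfies
`S_{m−ρ}^N û = 0`. -/
theorem fourierTransform_almost_homogeneous (m : ℕ) (ρ : ℝ) (N : ℕ) (hN : 1 ≤ N)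
    (u : 𝓢(EuclideanSpace ℝ (Fin m), ℂ) →L[ℝ] ℂ)
    (hu : (eulerOp m ρ)^[N] u = 0) :
    (eulerOp m ((m : ℝ) - ρ))^[N] (u.comp (SchwartzMap.fourierTransformCLM ℝ)) = 0 :=
  fourierTransform_almost_homogeneous_general m ρ N u hu

end
end

section
/- Let m ∈ ℕ, N ≥ 1, and ρ ∈ ℝ be such that M := ρ − m is a nonnegative integer. Let u be a tempered distribution on ℝ^m such that S_ρ^N u = Σ_{|α| ≤ M} c^α ∂^α δ₀ for some complex constants c^α. Define the modified distribution u' = u − Σ_{|α| ≤ M−1} (c^α / (M − |α|)^N) ∂^α δ₀. Then S_ρ^{N+1} u' = 0, i.e. u' scales almost homogeneously with degree ρ. -/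
open SchwartzMap

noncomputable section

/-- The iterated partial derivative `∂^α` (for a multi-index `α : Fin m → ℕ`) as a
continuous linear map on Schwartz space. -/
def multiPDeriv (m : ℕ) (α : Fin m → ℕ) :
    𝓢(EuclideanSpace ℝ (Fin m), ℂ) →L[ℝ] 𝓢(EuclideanSpace ℝ (Fin m), ℂ) :=
  (List.ofFn fun i : Fin m =>
    (LineDeriv.lineDerivOpCLM ℝ 𝓢(EuclideanSpace ℝ (Fin m), ℂ) (EuclideanSpace.single i (1 : ℝ))) ^ (α i)).prod

/-- The tempered distribution `∂^α δ₀ : f ↦ (−1)^{|α|} (∂^α f)(0)`. -/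
def deltaDeriv (m : ℕ) (α : Fin m → ℕ) :
    𝓢(EuclideanSpace ℝ (Fin m), ℂ) →L[ℝ] ℂ :=
  ((-1 : ℂ) ^ (∑ i, α i)) •
    (((BoundedContinuousFunction.evalCLM ℝ (0 : EuclideanSpace ℝ (Fin m))).comp
      (SchwartzMap.toBoundedContinuousFunctionCLM ℝ (EuclideanSpace ℝ (Fin m)) ℂ)).comp (multiPDeriv m α))

/-- The finite set of multi-indices `α ∈ ℕ^m` with `|α| ≤ M`. -/
def multiIdxLE (m M : ℕ) : Finset (Fin m → ℕ) :=
  (Finset.Icc (0 : Fin m → ℕ) fun _ => M).filter fun α => ∑ i, α i ≤ M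


/-!
The Euler operator is the transpose of `A = ρ - ∑ᵢ ∂ᵢ xᵢ` on Schwartz space. From
`∂ⱼ A = (A - 1) ∂ⱼ` and `(A g)(0) = (ρ - m) g(0)` one gets that `∂^α δ₀` is an eigenvector of
`S_ρ` with eigenvalue `ρ - m - |α| = M - |α|`. Subtracting `c^α / (M - |α|)^N · ∂^α δ₀` removes
from `S_ρ^N u` exactly the components with nonzero eigenvalue; what is left lies in the kernel
of `S_ρ`.
-/

section SemiconjBy

variable {R : Type*} [Ring R]

theorem SemiconjBy.pow_left_sub_natCast {d a : R} (h : SemiconjBy d a (a - 1)) (k : ℕ) :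
    SemiconjBy (d ^ k) a (a - k) := by
  induction k with
  | zero => simp
  | succ k ih =>
    rw [pow_succ, Nat.cast_succ, ← sub_sub]
    exact (ih.sub_right (Commute.one_right _)).mul_left h

theorem SemiconjBy.list_prod_ofFn_pow {m : ℕ} {d : Fin m → R} {a : R}
    (h : ∀ j, SemiconjBy (d j) a (a - 1)) (α : Fin m → ℕ) :
    SemiconjBy (List.ofFn fun j => d j ^ α j).prod a (a - (∑ j, α j : ℕ)) := by
  induction m with
  | zero => simp
  | succ m ih =>
    have head : SemiconjBy (d 0 ^ α 0) (a - (∑ j : Fin m, α j.succ : ℕ))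
        (a - α 0 - (∑ j : Fin m, α j.succ : ℕ)) :=
      ((h 0).pow_left_sub_natCast (α 0)).sub_right (Nat.cast_commute _ _).symm
    rw [List.ofFn_succ, List.prod_cons, Fin.sum_univ_succ, Nat.cast_add, ← sub_sub]
    exact head.mul_left (ih (fun j => h j.succ) fun j => α j.succ)

end SemiconjBy

theorem Module.End.pow_succ_apply_sub_sum_eq_zero {K V ι : Type*} [Field K] [DecidableEq K]
    [AddCommGroup V] [Module K V] (T : Module.End K V) {v : ι → V} {μ : ι → K}
    (hv : ∀ i, T (v i) = μ i • v i) {s : Finset ι} {c : ι → K} {u : V} {N : ℕ}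
    (hu : (T ^ N) u = ∑ i ∈ s, c i • v i) :
    (T ^ (N + 1)) (u - ∑ i ∈ s with μ i ≠ 0, (c i / μ i ^ N) • v i) = 0 := by
  have hpow : ∀ n i, (T ^ n) (v i) = μ i ^ n • v i := by
    intro n i
    induction n with
    | zero => simp
    | succ n ih => rw [pow_succ', Module.End.mul_apply, ih, map_smul, hv, smul_smul, pow_succ]
  have hcorr : (T ^ N) (∑ i ∈ s with μ i ≠ 0, (c i / μ i ^ N) • v i)
      = ∑ i ∈ s with μ i ≠ 0, c i • v i := by
    simp only [map_sum, map_smul, hpow, smul_smul]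
    refine Finset.sum_congr rfl fun i hi => ?_
    rw [div_mul_cancel₀ _ (pow_ne_zero _ (Finset.mem_filter.1 hi).2)]
  have hrest : (T ^ N) (u - ∑ i ∈ s with μ i ≠ 0, (c i / μ i ^ N) • v i)
      = ∑ i ∈ s with ¬μ i ≠ 0, c i • v i := by
    rw [map_sub, hu, hcorr, ← Finset.sum_filter_add_sum_filter_not s (fun i => μ i ≠ 0),
      add_sub_cancel_left]
  rw [pow_succ', Module.End.mul_apply, hrest, map_sum]
  refine Finset.sum_eq_zero fun i hi => ?_
  rw [map_smul, hv, not_not.1 (Finset.mem_filter.1 hi).2, zero_smul, smul_zero]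

section EulerOperator

variable {m : ℕ}

def partialCLM (m : ℕ) (i : Fin m) :
    𝓢(EuclideanSpace ℝ (Fin m), ℂ) →L[ℝ] 𝓢(EuclideanSpace ℝ (Fin m), ℂ) :=
  LineDeriv.lineDerivOpCLM ℝ _ (EuclideanSpace.single i (1 : ℝ))

theorem partialCLM_apply (i : Fin m) (f : 𝓢(EuclideanSpace ℝ (Fin m), ℂ))
    (x : EuclideanSpace ℝ (Fin m)) :
    partialCLM m i f x = fderiv ℝ f x (EuclideanSpace.single i 1) :=
  rfl

theorem coordMulCLM_apply (i : Fin m) (f : 𝓢(EuclideanSpace ℝ (Fin m), ℂ))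
    (x : EuclideanSpace ℝ (Fin m)) :
    coordMulCLM m i f x = x i • f x :=
  rfl

theorem multiPDeriv_eq_prod (α : Fin m → ℕ) :
    multiPDeriv m α = (List.ofFn fun i => partialCLM m i ^ α i).prod :=
  rfl

theorem commute_partialCLM (i j : Fin m) : Commute (partialCLM m i) (partialCLM m j) := by
  ext f x
  have hf : ContDiff ℝ 2 f := f.smooth 2
  have hdiff : DifferentiableAt ℝ (fderiv ℝ f) x :=
    (hf.fderiv_right (m := 1) (by norm_num)).differentiable (by norm_num) |>.differentiableAt
  have hsnd : ∀ v w, partialCLM m v (partialCLM m w f) x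
      = fderiv ℝ (fderiv ℝ f) x (EuclideanSpace.single v 1) (EuclideanSpace.single w 1) := by
    intro v w
    rw [partialCLM_apply, show ⇑(partialCLM m w f) = fun y => fderiv ℝ f y
      (EuclideanSpace.single w 1) from rfl, fderiv_clm_apply hdiff (differentiableAt_const _)]
    simp
  simp only [mul_apply_eq_comp, hsnd]
  exact hf.contDiffAt.isSymmSndFDerivAt (by simp) _ _

theorem partialCLM_mul_coordMulCLM (j i : Fin m) :
    partialCLM m j * coordMulCLM m i
      = coordMulCLM m i * partialCLM m j + if j = i then 1 else 0 := by
  ext f x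
  have hmul : fderiv ℝ (coordMulCLM m i f) x
      = x i • fderiv ℝ f x + (EuclideanSpace.proj i : _ →L[ℝ] ℝ).smulRight (f x) := by
    rw [show ⇑(coordMulCLM m i f) = fun y => (EuclideanSpace.proj i : _ →L[ℝ] ℝ) y • f y from rfl,
      fderiv_fun_smul (EuclideanSpace.proj i).differentiableAt f.differentiableAt,
      ContinuousLinearMap.fderiv]
    rfl
  rw [add_apply, mul_apply_eq_comp, partialCLM_apply, hmul]
  split_ifs with hji
  · subst hji
    simp [partialCLM_apply, coordMulCLM_apply]
  · simp [partialCLM_apply, coordMulCLM_apply, Ne.symm hji]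

def eulerTransposeCLM (m : ℕ) (ρ : ℝ) :
    𝓢(EuclideanSpace ℝ (Fin m), ℂ) →L[ℝ] 𝓢(EuclideanSpace ℝ (Fin m), ℂ) :=
  ρ • 1 - ∑ i, partialCLM m i * coordMulCLM m i

theorem eulerOp_eq_comp (ρ : ℝ) (u : 𝓢(EuclideanSpace ℝ (Fin m), ℂ) →L[ℝ] ℂ) :
    eulerOp m ρ u = u.comp (eulerTransposeCLM m ρ) := by
  ext f
  simp [eulerOp, eulerTransposeCLM, partialCLM, map_sum]

theorem semiconjBy_partialCLM_eulerTransposeCLM (ρ : ℝ) (j : Fin m) :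
    SemiconjBy (partialCLM m j) (eulerTransposeCLM m ρ) (eulerTransposeCLM m ρ - 1) := by
  have hterm : ∀ i, partialCLM m j * (partialCLM m i * coordMulCLM m i)
      = partialCLM m i * coordMulCLM m i * partialCLM m j
        + if j = i then partialCLM m i else 0 := by
    intro i
    rw [← mul_assoc, (commute_partialCLM j i).eq, mul_assoc, partialCLM_mul_coordMulCLM, mul_add,
      ← mul_assoc, mul_ite, mul_one, mul_zero]
  unfold SemiconjBy eulerTransposeCLM
  rw [mul_sub, Finset.mul_sum, Finset.sum_congr rfl fun i _ => hterm i, Finset.sum_add_distrib,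
    Finset.sum_ite_eq, if_pos (Finset.mem_univ _), sub_mul, sub_mul, Finset.sum_mul, one_mul,
    mul_smul_comm, smul_mul_assoc, mul_one, one_mul]
  abel

theorem eulerTransposeCLM_apply_zero (ρ : ℝ) (f : 𝓢(EuclideanSpace ℝ (Fin m), ℂ)) :
    eulerTransposeCLM m ρ f 0 = (ρ - m) • f 0 := by
  have hterm : ∀ i, partialCLM m i (coordMulCLM m i f) 0 = f 0 := by
    intro i
    simpa [coordMulCLM_apply] using congr($(partialCLM_mul_coordMulCLM i i) f 0)
  simp [eulerTransposeCLM, hterm, sub_smul]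

theorem eulerOp_deltaDeriv (ρ : ℝ) (α : Fin m → ℕ) :
    eulerOp m ρ (deltaDeriv m α) = (ρ - m - (∑ i, α i : ℕ)) • deltaDeriv m α := by
  have hcomm : SemiconjBy (multiPDeriv m α) (eulerTransposeCLM m ρ)
      (eulerTransposeCLM m ρ - (∑ i, α i : ℕ)) := by
    rw [multiPDeriv_eq_prod]
    exact .list_prod_ofFn_pow (fun j => semiconjBy_partialCLM_eulerTransposeCLM ρ j) α
  ext f
  have hf := congr($hcomm.eq f 0)
  simp only [mul_apply_eq_comp, sub_apply, eulerTransposeCLM_apply_zero] at hf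
  simp only [deltaDeriv, eulerOp_eq_comp, ContinuousLinearMap.smul_comp, smul_apply,
    ContinuousLinearMap.comp_apply, BoundedContinuousFunction.evalCLM_apply,
    toBoundedContinuousFunctionCLM_apply, hf, Complex.real_smul, Complex.ofReal_sub,
    Complex.ofReal_natCast, Nat.cast_sum, sum_apply, natCast_apply, nsmul_eq_mul, smul_eq_mul,
    Complex.ofReal_sum]
  rw [← Finset.sum_mul]
  ring

def eulerOpEnd (m : ℕ) (ρ : ℝ) : Module.End ℂ (𝓢(EuclideanSpace ℝ (Fin m), ℂ) →L[ℝ] ℂ) where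
  toFun := eulerOp m ρ
  map_add' u v := by simp only [eulerOp_eq_comp, ContinuousLinearMap.add_comp]
  map_smul' z u := by
    simp only [eulerOp_eq_comp, ContinuousLinearMap.smul_comp, RingHom.id_apply]

theorem coe_eulerOpEnd (ρ : ℝ) : ⇑(eulerOpEnd m ρ) = eulerOp m ρ :=
  rfl

end EulerOperator

theorem almost_homogeneous_of_modified_general (m : ℕ) (N : ℕ) (ρ : ℝ) (M : ℕ)
    (hM : (M : ℝ) = ρ - m)
    (u : 𝓢(EuclideanSpace ℝ (Fin m), ℂ) →L[ℝ] ℂ)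
    (c : (Fin m → ℕ) → ℂ)
    (hu : (eulerOp m ρ)^[N] u = ∑ α ∈ multiIdxLE m M, c α • deltaDeriv m α) :
    (eulerOp m ρ)^[N + 1]
      (u - ∑ α ∈ (multiIdxLE m M).filter (fun α => ∑ i, α i < M),
        (c α / ((M : ℂ) - (∑ i, α i : ℕ)) ^ N) • deltaDeriv m α) = 0 := by
  have heigen : ∀ α, eulerOpEnd m ρ (deltaDeriv m α)
      = ((M : ℂ) - (∑ i, α i : ℕ)) • deltaDeriv m α := by
    intro α
    rw [coe_eulerOpEnd, eulerOp_deltaDeriv, ← hM]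
    ext f
    simp [Complex.real_smul]
  have hfilter : {α ∈ multiIdxLE m M | ∑ i, α i < M}
      = {α ∈ multiIdxLE m M | (M : ℂ) - (∑ i, α i : ℕ) ≠ 0} := by
    refine Finset.filter_congr fun α hα => ?_
    have hle : ∑ i, α i ≤ M := (Finset.mem_filter.1 hα).2
    rw [sub_ne_zero, Ne, Nat.cast_inj]
    omega
  rw [← coe_eulerOpEnd, ← Module.End.coe_pow] at hu ⊢
  rw [hfilter]
  exact (eulerOpEnd m ρ).pow_succ_apply_sub_sum_eq_zero heigen hu

/-- If `S_ρ^N u = Σ_{|α| ≤ M} c^α ∂^α δ₀` (with `M = ρ - m ∈ ℕ`, `N ≥ 1`), then the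
modified distribution `u' = u − Σ_{|α| < M} (c^α/(M−|α|)^N) ∂^α δ₀` scales almost
homogeneously with degree `ρ`: `S_ρ^{N+1} u' = 0`. -/
theorem almost_homogeneous_of_modified (m : ℕ) (N : ℕ) (hN : 1 ≤ N) (ρ : ℝ) (M : ℕ)
    (hM : (M : ℝ) = ρ - m)
    (u : 𝓢(EuclideanSpace ℝ (Fin m), ℂ) →L[ℝ] ℂ)
    (c : (Fin m → ℕ) → ℂ)
    (hu : (eulerOp m ρ)^[N] u = ∑ α ∈ multiIdxLE m M, c α • deltaDeriv m α) :
    (eulerOp m ρ)^[N + 1]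
      (u - ∑ α ∈ (multiIdxLE m M).filter (fun α => ∑ i, α i < M),
        (c α / ((M : ℂ) - (∑ i, α i : ℕ)) ^ N) • deltaDeriv m α) = 0 :=
  almost_homogeneous_of_modified_general m N ρ M hM u c hu
end
end
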